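/- Let b ∈ (0, +∞], let (H, φ) solve the EdGB FLRW system on [0, b), and suppose H(0) = β > 0 and H'(0) + 5β^2 > 0. Then H'(t) + 5·H(t)^2 > 0 for all t ∈ [0, b). -/

import Mathlib

/-!
Differentiating the Hamiltonian constraint and eliminating `φ''` with the scalar field equation
gives, wherever `H > 0`, an identity expressing `(H' + 5H²) · A` as a manifestly positive quantity
with `A > 0`; so `D₁ > 0` at interior times as long as `H > 0`. In turn, `H' > -5H²` keeps `H`
above the solution `β / (2 + 5βt)` of `y' = -5y²`, so `H` never reaches zero.
-/

/-- The EdGB FLRW system on a set `I ⊆ ℝ`: `H` is continuously differentiable and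
`φ` twice continuously differentiable on `I`, and for every `t ∈ I` the Hamiltonian
constraint `3H² − 3e^φ φ' H³ = φ'²/2` and the scalar field equation
`φ'' = −3Hφ' − 3e^φ H²(H² + H')` hold. -/
def EdGB (H φ : ℝ → ℝ) (I : Set ℝ) : Prop :=
  ContDiffOn ℝ 1 H I ∧ ContDiffOn ℝ 2 φ I ∧
  (∀ t ∈ I, 3 * H t ^ 2 - 3 * Real.exp (φ t) * deriv φ t * H t ^ 3 = (deriv φ t) ^ 2 / 2) ∧
  (∀ t ∈ I, deriv (deriv φ) t =
      -3 * H t * deriv φ t - 3 * Real.exp (φ t) * H t ^ 2 * (H t ^ 2 + deriv H t))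

open Set Filter Topology Real

theorem add_five_sq_pos_of_edgb_relations {e h p q d : ℝ} (he : 0 < e) (hh : 0 < h)
    (hcon : 3 * h ^ 2 - 3 * e * p * h ^ 3 = p ^ 2 / 2)
    (hfield : q = -3 * h * p - 3 * e * h ^ 2 * (h ^ 2 + d))
    (hdcon : 6 * h * d - 3 * e * (p ^ 2 + q) * h ^ 3 - 9 * e * p * h ^ 2 * d = p * q) :
    0 < d + 5 * h ^ 2 := by
  subst hfield
  have hp : p ≠ 0 := by
    rintro rfl
    nlinarith
  have hA : (2 - 2 * e * h * p + 3 * e ^ 2 * h ^ 4) * (3 * h ^ 2) = p ^ 2 + 9 * e ^ 2 * h ^ 6 := by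
    linear_combination 2 * hcon
  have hA_pos : 0 < 2 - 2 * e * h * p + 3 * e ^ 2 * h ^ 4 := by
    exact pos_of_mul_pos_left (hA ▸ by positivity) (by positivity : (0 : ℝ) ≤ 3 * h ^ 2)
  have hN_pos : 0 < (6 * h ^ 2 - 2 * p ^ 2) ^ 2 + p ^ 4 + 3 * e * h ^ 2 * p ^ 4 := by positivity
  -- The differentiated constraint, reduced modulo the constraint itself.
  have key : (d + 5 * h ^ 2) * ((2 - 2 * e * h * p + 3 * e ^ 2 * h ^ 4) * (3 * h * p ^ 2))
      = ((6 * h ^ 2 - 2 * p ^ 2) ^ 2 + p ^ 4 + 3 * e * h ^ 2 * p ^ 4) * h := by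
    linear_combination p ^ 2 * hdcon + (16 * h * p ^ 2 - 12 * h ^ 3 - 12 * e * h ^ 4 * p) * hcon
  have hprod := mul_pos hN_pos hh
  rw [← key] at hprod
  exact pos_of_mul_pos_left hprod (by positivity)

theorem EdGB.deriv_constraint {H φ : ℝ → ℝ} {I : Set ℝ} (hsys : EdGB H φ I) {t : ℝ}
    (ht : I ∈ 𝓝 t) :
    6 * H t * deriv H t - 3 * exp (φ t) * (deriv φ t ^ 2 + deriv (deriv φ) t) * H t ^ 3
      - 9 * exp (φ t) * deriv φ t * H t ^ 2 * deriv H t = deriv φ t * deriv (deriv φ) t := by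
  obtain ⟨hH, hφ, hcon, -⟩ := hsys
  obtain ⟨V, hVI, hV, htV⟩ := mem_nhds_iff.mp ht
  have hH' : HasDerivAt H (deriv H t) t :=
    ((hH.contDiffAt ht).differentiableAt one_ne_zero).hasDerivAt
  have hφ' : HasDerivAt φ (deriv φ t) t :=
    ((hφ.contDiffAt ht).differentiableAt two_ne_zero).hasDerivAt
  have hφ'' : HasDerivAt (deriv φ) (deriv (deriv φ) t) t := by
    have : ContDiffOn ℝ 1 (deriv φ) V :=
      ((contDiffOn_succ_iff_deriv_of_isOpen hV).mp (hφ.mono hVI)).2.2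
    exact ((this.contDiffAt (hV.mem_nhds htV)).differentiableAt one_ne_zero).hasDerivAt
  have hF := (((hH'.pow 2).const_mul 3).sub
    (((hφ'.exp.mul hφ'').mul (hH'.pow 3)).const_mul 3)).sub ((hφ''.pow 2).div_const 2)
  have hF0 : (fun s => 3 * H s ^ 2 - 3 * (exp (φ s) * deriv φ s * H s ^ 3) - deriv φ s ^ 2 / 2)
      =ᶠ[𝓝 t] fun _ => 0 := by
    filter_upwards [ht] with s hs
    linear_combination hcon s hs
  have := hF.unique ((hasDerivAt_const t (0 : ℝ)).congr_of_eventuallyEq hF0)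
  simp only [Nat.cast_ofNat, Pi.mul_apply, Pi.pow_apply] at this
  linear_combination this

theorem pos_of_riccati_lower_bound {f : ℝ → ℝ} {a b c : ℝ} (hc : 0 ≤ c)
    (hf : DifferentiableOn ℝ f (Icc a b)) (ha : 0 < f a)
    (hderiv : ∀ x ∈ Ioo a b, 0 < f x → -c * f x ^ 2 < deriv f x) :
    ∀ x ∈ Icc a b, 0 < f x := by
  -- Compare `f` with the solution of `y' = -c y²` starting at `y(a) = f(a)/2`.
  set B : ℝ → ℝ := fun x => ((f a / 2)⁻¹ + c * (x - a))⁻¹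
  have hden : ∀ x, a ≤ x → 0 < (f a / 2)⁻¹ + c * (x - a) := fun x hx => by
    have := mul_nonneg hc (sub_nonneg.mpr hx)
    positivity
  have hB : ∀ x, a ≤ x → HasDerivAt B (-c * B x ^ 2) x := fun x hx => by
    refine ((((hasDerivAt_id x).sub_const a).const_mul c).const_add (f a / 2)⁻¹).inv
      (hden x hx).ne' |>.congr_deriv ?_
    simp only [B, id, inv_pow, mul_one]
    ring
  have hBf : ∀ x ∈ Icc a b, B x ≤ f x := by
    refine image_le_of_deriv_right_lt_deriv_boundary' (B' := derivWithin f (Icc a b))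
      (fun x hx => (hB x hx.1).continuousAt.continuousWithinAt)
      (fun x hx => (hB x hx.1).hasDerivWithinAt) (by simp only [B, sub_self, mul_zero, add_zero, inv_inv]; linarith) hf.continuousOn
      (fun x hx => ((hf x (Ico_subset_Icc_self hx)).hasDerivWithinAt).mono_of_mem_nhdsWithin
        (Icc_mem_nhdsGE_of_mem hx)) ?_
    rintro x ⟨hax, hxb⟩ hBx
    obtain rfl | hax := hax.eq_or_lt
    · simp only [B, sub_self, mul_zero, add_zero, inv_inv] at hBx
      linarith
    rw [derivWithin_of_mem_nhds (Icc_mem_nhds hax hxb), hBx]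
    exact hderiv x ⟨hax, hxb⟩ (hBx ▸ inv_pos.mpr (hden x hax.le))
  exact fun x hx => (inv_pos.mpr (hden x hx.1)).trans_le (hBf x hx)

theorem EdGB.deriv_add_five_sq_pos {H φ : ℝ → ℝ} {I : Set ℝ} (hsys : EdGB H φ I) {t : ℝ}
    (ht : I ∈ 𝓝 t) (hHt : 0 < H t) : 0 < deriv H t + 5 * H t ^ 2 :=
  add_five_sq_pos_of_edgb_relations (exp_pos _) hHt (hsys.2.2.1 t (mem_of_mem_nhds ht))
    (hsys.2.2.2 t (mem_of_mem_nhds ht)) (hsys.deriv_constraint ht)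

theorem EdGB.pos_of_mem_Icc {H φ : ℝ → ℝ} {I : Set ℝ} (hsys : EdGB H φ I) {a b : ℝ}
    (hab : Icc a b ⊆ I) (ha : 0 < H a) : ∀ x ∈ Icc a b, 0 < H x :=
  pos_of_riccati_lower_bound (c := 5) (by norm_num)
    ((hsys.1.mono hab).differentiableOn one_ne_zero) ha fun x hx hHx => by
      have := hsys.deriv_add_five_sq_pos (mem_of_superset (Icc_mem_nhds hx.1 hx.2) hab) hHx
      linarith

theorem stmt_5 (b : EReal) (β : ℝ) (hβ : 0 < β) (H φ : ℝ → ℝ)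
    (hsys : EdGB H φ {t : ℝ | 0 ≤ t ∧ (t : EReal) < b})
    (h0 : H 0 = β) (hD0 : deriv H 0 + 5 * β ^ 2 > 0) :
    ∀ t : ℝ, 0 ≤ t → (t : EReal) < b → deriv H t + 5 * H t ^ 2 > 0 := by
  intro t ht htb
  obtain rfl | ht := ht.eq_or_lt
  · rwa [h0]
  have hIcc : Icc 0 t ⊆ {s : ℝ | 0 ≤ s ∧ (s : EReal) < b} := fun s hs =>
    ⟨hs.1, (EReal.coe_le_coe_iff.mpr hs.2).trans_lt htb⟩
  have hnhds : {s : ℝ | 0 ≤ s ∧ (s : EReal) < b} ∈ 𝓝 t :=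
    inter_mem (Ici_mem_nhds ht) (continuous_coe_real_ereal.continuousAt.preimage_mem_nhds
      (Iio_mem_nhds htb))
  exact hsys.deriv_add_five_sq_pos hnhds (hsys.pos_of_mem_Icc hIcc (h0 ▸ hβ) t ⟨ht.le, le_rfl⟩)
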